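/- For every p ∈ Δ and every label j with p_j > 0, the JS loss converges to half the MAE loss as π1 → 1 from the left: lim_{π1 → 1^-} L_JS(p, e_j; π1) = 1 − p_j = (1/2)·Σ_{k=1}^c |p_k − (e_j)_k|. -/

import Mathlib

/-- Discrete Kullback–Leibler divergence `D(a ‖ b) = Σ_k a_k·log(a_k/b_k)`
(with the convention `0·log 0 = 0`, automatic since multiplication by `0`). -/
noncomputable def klDiv {c : ℕ} (a b : Fin c → ℝ) : ℝ :=
  ∑ k, a k * Real.log (a k / b k)

/-- The `j`-th standard one-hot vector `e_j`. -/
def oneHot {c : ℕ} (j : Fin c) : Fin c → ℝ :=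
  fun k => if k = j then 1 else 0

/-- The JS loss of a prediction `p` in the simplex against the one-hot label `e_j`,
with hyperparameters `π1 ∈ (0,1)` and `π2 = 1 − π1`:
`L_JS(p, e_j; π1) = (π1·D(e_j ‖ m) + π2·D(p ‖ m))/Z` where `m = π1·e_j + π2·p` and
`Z = −(1 − π1)·log(1 − π1)`. -/
noncomputable def jsLoss {c : ℕ} (p : Fin c → ℝ) (j : Fin c) (π1 : ℝ) : ℝ :=
  (π1 * klDiv (oneHot j) (fun k => π1 * oneHot j k + (1 - π1) * p k)
      + (1 - π1) * klDiv p (fun k => π1 * oneHot j k + (1 - π1) * p k))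
    / (-(1 - π1) * Real.log (1 - π1))

/-! With `ε = 1 - π1` the mixture is `m_j = 1 - ε (1 - p_j)` and `m_k = ε p_k` for `k ≠ j`, so the
two divergences are explicit and the loss equals
`(1 - p_j) + [(1 - ε) log m_j / ε - p_j log p_j + p_j log m_j] / log ε`.
As `ε → 0⁺` the bracket stays bounded (`log m_j / ε → -(1 - p_j)`, a derivative of `log` at `1`)
while `1 / log ε → 0`. -/

open Real Filter Topology Finset

lemma mul_log_div_eq_sub (a : ℝ) {x : ℝ} (hx : x ≠ 0) :
    a * log (a / x) = a * log a - a * log x := by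
  rcases eq_or_ne a 0 with rfl | ha
  · simp
  · rw [log_div ha hx]
    ring

lemma klDiv_oneHot_left {c : ℕ} (j : Fin c) (m : Fin c → ℝ) :
    klDiv (oneHot j) m = -log (m j) := by
  rw [klDiv, sum_eq_single j (fun k _ hk => by simp [oneHot, hk]) (by simp)]
  simp [oneHot]

lemma klDiv_mix_oneHot {c : ℕ} {p : Fin c → ℝ} (hp1 : ∑ i, p i = 1) (j : Fin c) (t ε : ℝ) :
    klDiv p (fun k => t * oneHot j k + ε * p k)
      = p j * log (p j / (t + ε * p j)) - (1 - p j) * log ε := by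
  have hrest : ∀ k ∈ univ.erase j,
      p k * log (p k / (t * oneHot j k + ε * p k)) = -(p k * log ε) := by
    intro k hk
    rw [oneHot, if_neg (ne_of_mem_erase hk), mul_zero, zero_add]
    rcases eq_or_ne (p k) 0 with h | h
    · simp [h]
    · rw [div_mul_cancel_right₀ h, log_inv, mul_neg]
  rw [klDiv, ← add_sum_erase _ _ (mem_univ j), sum_congr rfl hrest, sum_neg_distrib,
    ← sum_mul, sum_erase_eq_sub (mem_univ j), hp1]
  simp [oneHot, sub_eq_add_neg]

lemma jsLoss_one_sub_eq {c : ℕ} {p : Fin c → ℝ} (hp1 : ∑ i, p i = 1) {j : Fin c} (hpj : 0 ≤ p j)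
    {ε : ℝ} (hε0 : 0 < ε) (hε1 : ε < 1) :
    jsLoss p j (1 - ε) = (1 - p j)
      + ((1 - ε) * (log (1 - ε * (1 - p j)) / ε)
        - (p j * log (p j) - p j * log (1 - ε * (1 - p j)))) * (log ε)⁻¹ := by
  have hm : 1 - ε + ε * p j = 1 - ε * (1 - p j) := by ring
  have hm0 : 1 - ε * (1 - p j) ≠ 0 := by nlinarith
  have hlog : log ε ≠ 0 := (log_neg hε0 hε1).ne
  rw [jsLoss, sub_sub_cancel, klDiv_oneHot_left, klDiv_mix_oneHot hp1 j, hm,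
    mul_log_div_eq_sub _ hm0]
  simp only [oneHot, if_true, mul_one, hm]
  field_simp
  ring

lemma tendsto_log_one_sub_mul_div (q : ℝ) :
    Tendsto (fun ε => log (1 - ε * q) / ε) (𝓝[>] 0) (𝓝 (-q)) := by
  have hderiv : HasDerivAt (fun ε => log (1 - ε * q)) (-q) 0 := by
    simpa using (((hasDerivAt_id (0 : ℝ)).mul_const q).const_sub 1).log (by simp)
  simpa [div_eq_inv_mul] using hderiv.tendsto_slope_zero_right

lemma tendsto_jsLoss_one_sub {c : ℕ} {p : Fin c → ℝ} (hp1 : ∑ i, p i = 1) {j : Fin c}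
    (hpj : 0 ≤ p j) :
    Tendsto (fun ε => jsLoss p j (1 - ε)) (𝓝[>] 0) (𝓝 (1 - p j)) := by
  have hinvlog : Tendsto (fun ε => (log ε)⁻¹) (𝓝[>] 0) (𝓝 0) :=
    tendsto_log_nhdsGT_zero.inv_tendsto_atBot
  have hid : Tendsto (fun ε : ℝ => ε) (𝓝[>] 0) (𝓝 0) := nhdsWithin_le_nhds
  have hlogm : Tendsto (fun ε => log (1 - ε * (1 - p j))) (𝓝[>] 0) (𝓝 0) := by
    simpa using ((tendsto_const_nhds (x := (1 : ℝ))).sub (hid.mul_const (1 - p j))).log (by simp)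
  have hlim := ((((hid.const_sub 1).mul (tendsto_log_one_sub_mul_div (1 - p j))).sub
    ((hlogm.const_mul (p j)).const_sub (p j * log (p j)))).mul hinvlog).const_add (1 - p j)
  rw [mul_zero, add_zero] at hlim
  refine hlim.congr' ?_
  filter_upwards [Ioo_mem_nhdsGT one_pos] with ε hε
  exact (jsLoss_one_sub_eq hp1 hpj hε.1 hε.2).symm

lemma tendsto_one_sub_nhdsLT_one : Tendsto (fun x : ℝ => 1 - x) (𝓝[<] 1) (𝓝[>] 0) := by
  have h := (continuous_sub_left (1 : ℝ)).continuousWithinAt.tendsto_nhdsWithin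
    (s := Set.Iio 1) (t := Set.Ioi 0) (x := 1) fun x hx => sub_pos.2 hx
  rwa [sub_self] at h

lemma sum_abs_sub_oneHot {c : ℕ} {p : Fin c → ℝ} (hp0 : ∀ i, 0 ≤ p i) (hp1 : ∑ i, p i = 1)
    (j : Fin c) : ∑ k, |p k - oneHot j k| = 2 * (1 - p j) := by
  have hpj : p j ≤ 1 := hp1 ▸ single_le_sum (fun i _ => hp0 i) (mem_univ j)
  have hrest : ∀ k ∈ univ.erase j, |p k - oneHot j k| = p k := fun k hk => by
    rw [oneHot, if_neg (ne_of_mem_erase hk), sub_zero, abs_of_nonneg (hp0 k)]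
  rw [← add_sum_erase _ _ (mem_univ j), sum_congr rfl hrest, sum_erase_eq_sub (mem_univ j), hp1,
    oneHot, if_pos rfl, abs_of_nonpos (by linarith)]
  ring

theorem jsLoss_tendsto_halfMAE_general (c : ℕ)
    (p : Fin c → ℝ) (hp0 : ∀ i, 0 ≤ p i) (hp1 : ∑ i, p i = 1)
    (j : Fin c) :
    Filter.Tendsto (fun π1 : ℝ => jsLoss p j π1) (nhdsWithin 1 (Set.Iio 1))
        (nhds (1 - p j)) ∧
      1 - p j = (1 / 2) * ∑ k, |p k - oneHot j k| := by
  refine ⟨?_, by rw [sum_abs_sub_oneHot hp0 hp1 j]; ring⟩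
  exact ((tendsto_jsLoss_one_sub hp1 (hp0 j)).comp tendsto_one_sub_nhdsLT_one).congr
    fun π1 => by simp

/-- For every `p` in the probability simplex and every label `j` with
`p_j > 0`, the JS loss converges to half the MAE loss as `π1 → 1` from the left:
`lim_{π1 → 1^-} L_JS(p, e_j; π1) = 1 − p_j = (1/2)·Σ_k |p_k − (e_j)_k|`. -/
theorem jsLoss_tendsto_halfMAE (c : ℕ) (hc : 2 ≤ c)
    (p : Fin c → ℝ) (hp0 : ∀ i, 0 ≤ p i) (hp1 : ∑ i, p i = 1)
    (j : Fin c) (hpj : 0 < p j) :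
    Filter.Tendsto (fun π1 : ℝ => jsLoss p j π1) (nhdsWithin 1 (Set.Iio 1))
        (nhds (1 - p j)) ∧
      1 - p j = (1 / 2) * ∑ k, |p k - oneHot j k| :=
  jsLoss_tendsto_halfMAE_general c p hp0 hp1 j
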